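/- Inversion for parallel: if Γ ⊢_B P ▶ T and P ≡ P₁ | P₂, then T ≡ T₁ | T₂ with Γ ⊢_{B₁} P₁ ▶ T₁ and Γ ⊢_{B₂} P₂ ▶ T₂ for some disjoint B₁, B₂ with B = B₁ ∪ B₂. -/

import Mathlib

/- ===== Syntax of behavioural types (Figure 4 of the paper) ===== -/

abbrev Name := ℕ
abbrev TVar := ℕ

inductive Pre where
  | snd : Name → Pre
  | rcv : Name → Pre
  | tau : Pre
deriving DecidableEq

inductive Ty where
  | nil  : Ty
  | pre  : Pre → Ty → Ty
  | ich  : Ty → Ty → Ty                   -- internal choice ⊕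
  | ech  : Pre → Ty → Pre → Ty → Ty       -- external choice & of guarded types
  | par  : Ty → Ty → Ty
  | new  : Name → Ty → Ty                 -- (new a)T
  | cls  : Name → Ty → Ty                 -- end[a];T
  | res  : Name → Ty → Ty                 -- (νa)T
  | obuf : Name → Ty                      -- open buffer [a]°
  | cbuf : Name → Ty                      -- closed buffer [a]•
  | tvar : TVar → List Name → Ty          -- t⟨ã⟩
deriving DecidableEq

/-- A system of mutually recursive type equations: each variable is mapped
to its formal parameters and its body. -/
abbrev Defs := TVar → List Name × Ty

def Pre.fn : Pre → Finset Name
  | .snd a => {a}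
  | .rcv a => {a}
  | .tau   => ∅

def Ty.fn : Ty → Finset Name
  | .nil => ∅
  | .pre κ T => κ.fn ∪ T.fn
  | .ich T S => T.fn ∪ S.fn
  | .ech κ₁ T κ₂ S => κ₁.fn ∪ T.fn ∪ κ₂.fn ∪ S.fn
  | .par T S => T.fn ∪ S.fn
  | .new a T => T.fn.erase a
  | .cls a T => insert a T.fn
  | .res a T => T.fn.erase a
  | .obuf a => {a}
  | .cbuf a => {a}
  | .tvar _ as => as.toFinset

/-- `lookupIdx xs as n` maps the i-th formal parameter of `xs` to the i-th
actual argument of `as`, leaving other names unchanged. -/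
def lookupIdx : List Name → List Name → Name → Name
  | [], _, n => n
  | _ :: _, [], n => n
  | x :: xs, a :: as, n => if n = x then a else lookupIdx xs as n

def Pre.sub (f : Name → Name) : Pre → Pre
  | .snd a => .snd (f a)
  | .rcv a => .rcv (f a)
  | .tau   => .tau

def Ty.sub (f : Name → Name) : Ty → Ty
  | .nil => .nil
  | .pre κ T => .pre (κ.sub f) (T.sub f)
  | .ich T S => .ich (T.sub f) (S.sub f)
  | .ech κ₁ T κ₂ S => .ech (κ₁.sub f) (T.sub f) (κ₂.sub f) (S.sub f)
  | .par T S => .par (T.sub f) (S.sub f)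
  | .new a T => .new (f a) (T.sub f)
  | .cls a T => .cls (f a) (T.sub f)
  | .res a T => .res (f a) (T.sub f)
  | .obuf a => .obuf (f a)
  | .cbuf a => .cbuf (f a)
  | .tvar t as => .tvar t (as.map f)

/-- Instantiation of the body of the equation for `t` with actual arguments `as`. -/
def instTy (D : Defs) (t : TVar) (as : List Name) : Ty :=
  (D t).2.sub (lookupIdx (D t).1 as)
/- ===== Labels, structural congruence and LTS semantics (Figure 5) ===== -/

inductive Lab where
  | snd : Name → Lab      -- ā
  | rcv : Name → Lab      -- a
  | tau : Lab
  | sync : Name → Lab     -- [a]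
  | cls : Name → Lab      -- close request
  | clsd : Name → Lab     -- close acceptance
  | csnd : Name → Lab     -- send from closed channel
deriving DecidableEq

def Lab.fn : Lab → Finset Name
  | .snd a => {a}
  | .rcv a => {a}
  | .tau => ∅
  | .sync a => {a}
  | .cls a => {a}
  | .clsd a => {a}
  | .csnd a => {a}

inductive Cong : Ty → Ty → Prop where
  | refl (T) : Cong T T
  | symm : Cong T S → Cong S T
  | trans : Cong T S → Cong S U → Cong T U
  | parComm : Cong (.par T S) (.par S T)
  | parAssoc : Cong (.par T (.par S U)) (.par (.par T S) U)
  | parNil : Cong (.par T .nil) T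
  | resSwap : Cong (.res a (.res b T)) (.res b (.res a T))
  | resNil : Cong (.res a .nil) .nil
  | resCBuf : Cong (.res a (.cbuf a)) .nil
  | resOBuf : Cong (.res a (.obuf a)) .nil
  | scope : a ∉ Ty.fn T → Cong (.par T (.res a S)) (.res a (.par T S))
  | parCong : Cong T T' → Cong S S' → Cong (.par T S) (.par T' S')
  | resCong : Cong T T' → Cong (.res a T) (.res a T')

inductive Step (D : Defs) : Ty → Lab → Ty → Prop where
  | snd : Step D (.pre (.snd a) T) (.snd a) T
  | rcv : Step D (.pre (.rcv a) T) (.rcv a) T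
  | tau : Step D (.pre .tau T) .tau T
  | sel1 : Step D (.ich T S) .tau T
  | sel2 : Step D (.ich T S) .tau S
  | bra1 : Step D (.pre κ₁ T) α T' → Step D (.ech κ₁ T κ₂ S) α T'
  | bra2 : Step D (.pre κ₂ S) α S' → Step D (.ech κ₁ T κ₂ S) α S'
  | parL : Step D T α T' → Step D (.par T S) α (.par T' S)
  | parR : Step D S α S' → Step D (.par T S) α (.par T S')
  | comL : Step D T (.snd a) T' → Step D S (.rcv a) S' →
      Step D (.par T S) (.sync a) (.par T' S')
  | comR : Step D T (.rcv a) T' → Step D S (.snd a) S' →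
      Step D (.par T S) (.sync a) (.par T' S')
  | comCL : Step D T (.csnd a) T' → Step D S (.rcv a) S' →
      Step D (.par T S) (.sync a) (.par T' S')
  | comCR : Step D T (.rcv a) T' → Step D S (.csnd a) S' →
      Step D (.par T S) (.sync a) (.par T' S')
  | new : Step D (.new a T) .tau (.res a (.par T (.obuf a)))
  | fin : Step D (.cls a T) (.cls a) T
  | buf : Step D (.obuf a) (.clsd a) (.cbuf a)
  | cld : Step D (.cbuf a) (.csnd a) (.cbuf a)
  | closeL : Step D T (.cls a) T' → Step D S (.clsd a) S' →
      Step D (.par T S) .tau (.par T' S')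
  | closeR : Step D T (.clsd a) T' → Step D S (.cls a) S' →
      Step D (.par T S) .tau (.par T' S')
  | res1 : Step D T α T' → Lab.fn α ≠ {a} → Step D (.res a T) α (.res a T')
  | res2 : Step D T (.sync a) T' → Step D (.res a T) .tau (.res a T')
  | eq : Cong T T' → Step D T α T'' → Step D T' α T''
  | defU : Step D (instTy D t as) α T' → Step D (.tvar t as) α T'
/- ===== MiGo processes (Figure 1) and the typing system (Figure 4) ===== -/

inductive Expr where
  | val : ℕ → Expr
  | evar : ℕ → Expr
  | esucc : Expr → Expr
deriving DecidableEq

inductive Eval : Expr → ℕ → Prop where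
  | val : Eval (.val n) n
  | succ : Eval e n → Eval (.esucc e) (n + 1)

inductive Proc where
  | nil : Proc
  | snd : Name → Expr → Proc → Proc        -- u!⟨e⟩;P
  | rcv : Name → ℕ → Proc → Proc           -- u?(x);P
  | ptau : Proc → Proc                     -- τ;P
  | close : Name → Proc → Proc             -- close u;P
  | sel : Proc → Proc → Proc               -- select between two guarded processes
  | ite : Expr → Proc → Proc → Proc        -- if e then P else Q
  | newc : Name → Proc → Proc              -- new channel
  | par : Proc → Proc → Proc
  | call : ℕ → List Expr → List Name → Proc -- X⟨ẽ, ũ⟩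
  | resP : Name → Proc → Proc              -- (νc)P
  | buf : Name → Proc                      -- open (empty, synchronous) buffer
  | cbufP : Name → Proc                    -- closed buffer
deriving DecidableEq

/-- Process definitions: value parameters, channel parameters, body. -/
abbrev PDefs := ℕ → List ℕ × List Name × Proc

def Expr.vsub (x v : ℕ) : Expr → Expr
  | .val n => .val n
  | .evar y => if y = x then .val v else .evar y
  | .esucc e => .esucc (e.vsub x v)

def Proc.vsub (x v : ℕ) : Proc → Proc
  | .nil => .nil
  | .snd c e P => .snd c (e.vsub x v) (P.vsub x v)
  | .rcv c y P => if y = x then .rcv c y P else .rcv c y (P.vsub x v)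
  | .ptau P => .ptau (P.vsub x v)
  | .close c P => .close c (P.vsub x v)
  | .sel P Q => .sel (P.vsub x v) (Q.vsub x v)
  | .ite e P Q => .ite (e.vsub x v) (P.vsub x v) (Q.vsub x v)
  | .newc y P => .newc y (P.vsub x v)
  | .par P Q => .par (P.vsub x v) (Q.vsub x v)
  | .call X es cs => .call X (es.map (Expr.vsub x v)) cs
  | .resP c P => .resP c (P.vsub x v)
  | .buf c => .buf c
  | .cbufP c => .cbufP c

def Proc.csub (f : Name → Name) : Proc → Proc
  | .nil => .nil
  | .snd c e P => .snd (f c) e (P.csub f)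
  | .rcv c y P => .rcv (f c) y (P.csub f)
  | .ptau P => .ptau (P.csub f)
  | .close c P => .close (f c) (P.csub f)
  | .sel P Q => .sel (P.csub f) (Q.csub f)
  | .ite e P Q => .ite e (P.csub f) (Q.csub f)
  | .newc y P => .newc (f y) (P.csub f)
  | .par P Q => .par (P.csub f) (Q.csub f)
  | .call X es cs => .call X es (cs.map f)
  | .resP c P => .resP (f c) (P.csub f)
  | .buf c => .buf (f c)
  | .cbufP c => .cbufP (f c)

def Proc.vsubs : List ℕ → List ℕ → Proc → Proc
  | [], _, P => P
  | _ :: _, [], P => P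
  | x :: xs, v :: vs, P => Proc.vsubs xs vs (P.vsub x v)

/-- Instantiation of the body of definition `X` with values `vs` and channels `cs`. -/
def instP (D : PDefs) (X : ℕ) (vs : List ℕ) (cs : List Name) : Proc :=
  Proc.csub (lookupIdx (D X).2.1 cs) (Proc.vsubs (D X).1 vs (D X).2.2)

def Proc.pfn : Proc → Finset Name
  | .nil => ∅
  | .snd c _ P => insert c P.pfn
  | .rcv c _ P => insert c P.pfn
  | .ptau P => P.pfn
  | .close c P => insert c P.pfn
  | .sel P Q => P.pfn ∪ Q.pfn
  | .ite _ P Q => P.pfn ∪ Q.pfn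
  | .newc y P => P.pfn.erase y
  | .par P Q => P.pfn ∪ Q.pfn
  | .call _ _ cs => cs.toFinset
  | .resP c P => P.pfn.erase c
  | .buf c => {c}
  | .cbufP c => {c}

/-- Structural congruence on processes. -/
inductive PCong : Proc → Proc → Prop where
  | refl (P) : PCong P P
  | symm : PCong P Q → PCong Q P
  | trans : PCong P Q → PCong Q R → PCong P R
  | parComm : PCong (.par P Q) (.par Q P)
  | parAssoc : PCong (.par P (.par Q R)) (.par (.par P Q) R)
  | parNil : PCong (.par P .nil) P
  | resSwap : PCong (.resP c (.resP d P)) (.resP d (.resP c P))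
  | resNil : PCong (.resP c .nil) .nil
  | resBuf : PCong (.resP c (.buf c)) .nil
  | resCBuf : PCong (.resP c (.cbufP c)) .nil
  | scope : c ∉ Proc.pfn P → PCong (.par P (.resP c Q)) (.resP c (.par P Q))
  | parCong : PCong P P' → PCong Q Q' → PCong (.par P Q) (.par P' Q')
  | resCong : PCong P Q → PCong (.resP c P) (.resP c Q)

/-- The (runtime) typing judgement `Γ ⊢_B P ▶ T` of Figure 4 (with a single
payload type, so the environment `Γ` is left implicit); `B` is the set of
channels with active buffers. -/
inductive Typed : Finset Name → Proc → Ty → Prop where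
  | nil : Typed ∅ .nil .nil
  | snd : Typed ∅ P T → Typed ∅ (.snd c e P) (.pre (.snd c) T)
  | rcv : Typed ∅ P T → Typed ∅ (.rcv c x P) (.pre (.rcv c) T)
  | ptau : Typed ∅ P T → Typed ∅ (.ptau P) (.pre .tau T)
  | close : Typed ∅ P T → Typed ∅ (.close c P) (.cls c T)
  | sel : Typed ∅ g₁ (.pre κ₁ T₁) → Typed ∅ g₂ (.pre κ₂ T₂) →
      Typed ∅ (.sel g₁ g₂) (.ech κ₁ T₁ κ₂ T₂)
  | ite : Typed ∅ P S → Typed ∅ Q T → Typed ∅ (.ite e P Q) (.ich S T)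
  | newc : Typed ∅ P T → Typed ∅ (.newc y P) (.new y T)
  | callP : Typed ∅ (.call X es cs) (.tvar X cs)
  | par : Typed B₁ P T → Typed B₂ Q S → Disjoint B₁ B₂ →
      Typed (B₁ ∪ B₂) (.par P Q) (.par T S)
  | res : Typed B P T → Typed (B.erase c) (.resP c P) (.res c T)
  | buf : Typed {c} (.buf c) (.obuf c)
  | cbuf : Typed {c} (.cbufP c) (.cbuf c)

/-! Typing is invariant under structural congruence up to congruence of types: each axiom of `≡`
on processes is matched by the same axiom on types, and scope extrusion is sound because the free
names of the type and the buffer set of a typed process are free names of the process. Moving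
`P` to `P₁ | P₂` this way, the typing of `P₁ | P₂` can only end with rule [parr]. -/

namespace Typed

variable {B : Finset Name} {P : Proc} {T : Ty}

theorem fn_subset_pfn (h : Typed B P T) : T.fn ⊆ P.pfn := by
  induction h with
  | nil | callP | buf | cbuf => simp [Ty.fn, Proc.pfn]
  | snd _ ih | rcv _ ih =>
      simp only [Ty.fn, Proc.pfn, Pre.fn]
      rw [Finset.insert_eq]
      exact Finset.union_subset_union_right ih
  | ptau _ ih => simpa [Ty.fn, Proc.pfn, Pre.fn] using ih
  | close _ ih => exact Finset.insert_subset_insert _ ih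
  | sel _ _ ih₁ ih₂ =>
      simp only [Ty.fn, Proc.pfn] at ih₁ ih₂ ⊢
      rw [Finset.union_assoc (_ ∪ _)]
      exact Finset.union_subset_union ih₁ ih₂
  | ite _ _ ih₁ ih₂ | par _ _ _ ih₁ ih₂ => exact Finset.union_subset_union ih₁ ih₂
  | newc _ ih | res _ ih => exact Finset.erase_subset_erase _ ih

theorem buffers_subset_pfn (h : Typed B P T) : B ⊆ P.pfn := by
  induction h with
  | par _ _ _ ih₁ ih₂ => exact Finset.union_subset_union ih₁ ih₂
  | res _ ih => exact Finset.erase_subset_erase _ ih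
  | _ => simp [Proc.pfn]

theorem resP_buf_self (c : Name) : Typed ∅ (.resP c (.buf c)) (.res c (.obuf c)) := by
  simpa using (buf (c := c)).res (c := c)

theorem resP_cbufP_self (c : Name) : Typed ∅ (.resP c (.cbufP c)) (.res c (.cbuf c)) := by
  simpa using (cbuf (c := c)).res (c := c)

end Typed

def TypingTransfer (P Q : Proc) : Prop :=
  ∀ ⦃B T⦄, Typed B P T → ∃ T', Cong T T' ∧ Typed B Q T'

namespace TypingTransfer

variable {P P' Q Q' R : Proc} {c : Name}

protected theorem refl (P : Proc) : TypingTransfer P P :=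
  fun _ T h => ⟨T, .refl T, h⟩

protected theorem trans (hPQ : TypingTransfer P Q) (hQR : TypingTransfer Q R) :
    TypingTransfer P R := fun _ _ h =>
  let ⟨_, hc, h'⟩ := hPQ h
  let ⟨T'', hc', h''⟩ := hQR h'
  ⟨T'', hc.trans hc', h''⟩

theorem par (hP : TypingTransfer P P') (hQ : TypingTransfer Q Q') :
    TypingTransfer (.par P Q) (.par P' Q') := by
  intro _ _ h
  cases h with | par h₁ h₂ hd =>
  obtain ⟨_, hc₁, h₁'⟩ := hP h₁
  obtain ⟨_, hc₂, h₂'⟩ := hQ h₂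
  exact ⟨_, hc₁.parCong hc₂, h₁'.par h₂' hd⟩

theorem res (hP : TypingTransfer P P') : TypingTransfer (.resP c P) (.resP c P') := by
  intro _ _ h
  cases h with | res h =>
  obtain ⟨_, hc, h'⟩ := hP h
  exact ⟨_, hc.resCong, h'.res⟩

theorem nil_left {T : Ty} (h : Typed ∅ P T) (hT : Cong T .nil) :
    TypingTransfer .nil P := by
  rintro _ _ ⟨⟩
  exact ⟨T, hT.symm, h⟩

end TypingTransfer

section Axioms

variable {P Q R : Proc} {c d : Name}

theorem typingTransfer_parComm : TypingTransfer (.par P Q) (.par Q P) := by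
  intro _ _ h
  cases h with | par h₁ h₂ hd =>
  rw [Finset.union_comm]
  exact ⟨_, .parComm, h₂.par h₁ hd.symm⟩

theorem typingTransfer_parAssoc : TypingTransfer (.par P (.par Q R)) (.par (.par P Q) R) := by
  intro _ _ h
  cases h with | par h₁ h₂₃ hd =>
  cases h₂₃ with | par h₂ h₃ hd₂₃ =>
  rw [Finset.disjoint_union_right] at hd
  rw [← Finset.union_assoc]
  refine ⟨_, .parAssoc, (h₁.par h₂ hd.1).par h₃ ?_⟩
  exact Finset.disjoint_union_left.mpr ⟨hd.2, hd₂₃⟩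

theorem typingTransfer_parAssoc_symm :
    TypingTransfer (.par (.par P Q) R) (.par P (.par Q R)) := by
  intro _ _ h
  cases h with | par h₁₂ h₃ hd =>
  cases h₁₂ with | par h₁ h₂ hd₁₂ =>
  rw [Finset.disjoint_union_left] at hd
  rw [Finset.union_assoc]
  refine ⟨_, Cong.parAssoc.symm, h₁.par (h₂.par h₃ hd.2) ?_⟩
  exact Finset.disjoint_union_right.mpr ⟨hd₁₂, hd.1⟩

theorem typingTransfer_parNil : TypingTransfer (.par P .nil) P := by
  intro _ _ h
  cases h with | par h₁ h₂ =>
  cases h₂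
  exact ⟨_, .parNil, by simpa using h₁⟩

theorem typingTransfer_parNil_symm : TypingTransfer P (.par P .nil) := fun B _ h =>
  ⟨_, Cong.parNil.symm, by simpa using h.par Typed.nil (Finset.disjoint_empty_right B)⟩

theorem typingTransfer_resSwap : TypingTransfer (.resP c (.resP d P)) (.resP d (.resP c P)) := by
  intro _ _ h
  cases h with | res h =>
  cases h with | res h =>
  rw [Finset.erase_right_comm]
  exact ⟨_, .resSwap, h.res.res⟩

theorem typingTransfer_resNil : TypingTransfer (.resP c .nil) .nil := by
  intro _ _ h
  cases h with | res h =>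
  cases h
  exact ⟨_, .resNil, .nil⟩

theorem typingTransfer_resBuf : TypingTransfer (.resP c (.buf c)) .nil := by
  intro _ _ h
  cases h with | res h =>
  cases h
  exact ⟨_, .resOBuf, by simpa using Typed.nil⟩

theorem typingTransfer_resCBuf : TypingTransfer (.resP c (.cbufP c)) .nil := by
  intro _ _ h
  cases h with | res h =>
  cases h
  exact ⟨_, .resCBuf, by simpa using Typed.nil⟩

theorem typingTransfer_scope (hc : c ∉ P.pfn) :
    TypingTransfer (.par P (.resP c Q)) (.resP c (.par P Q)) := by
  intro _ _ h
  cases h with | @par B₁ _ _ _ _ _ h₁ h₂ hd =>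
  cases h₂ with | @res B₂ _ _ _ h₂ =>
  have hcB : c ∉ B₁ := fun h => hc (h₁.buffers_subset_pfn h)
  have hcT := fun h => hc (h₁.fn_subset_pfn h)
  rw [← Finset.disjoint_erase_comm, Finset.erase_eq_of_notMem hcB] at hd
  rw [← Finset.erase_eq_of_notMem hcB, ← Finset.erase_union_distrib]
  exact ⟨_, .scope hcT, (h₁.par h₂ hd).res⟩

theorem typingTransfer_scope_symm (hc : c ∉ P.pfn) :
    TypingTransfer (.resP c (.par P Q)) (.par P (.resP c Q)) := by
  intro _ _ h
  cases h with | res h =>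
  cases h with | @par B₁ _ _ B₂ _ _ h₁ h₂ hd =>
  have hcB : c ∉ B₁ := fun h => hc (h₁.buffers_subset_pfn h)
  have hcT := fun h => hc (h₁.fn_subset_pfn h)
  rw [Finset.erase_union_distrib, Finset.erase_eq_of_notMem hcB]
  exact ⟨_, (Cong.scope hcT).symm, h₁.par h₂.res (hd.mono_right (Finset.erase_subset _ _))⟩

end Axioms

theorem PCong.typingTransfer {P Q : Proc} (h : PCong P Q) :
    TypingTransfer P Q ∧ TypingTransfer Q P := by
  induction h with
  | refl P => exact ⟨.refl P, .refl P⟩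
  | symm _ ih => exact ih.symm
  | trans _ _ ih₁ ih₂ => exact ⟨ih₁.1.trans ih₂.1, ih₂.2.trans ih₁.2⟩
  | parComm => exact ⟨typingTransfer_parComm, typingTransfer_parComm⟩
  | parAssoc => exact ⟨typingTransfer_parAssoc, typingTransfer_parAssoc_symm⟩
  | parNil => exact ⟨typingTransfer_parNil, typingTransfer_parNil_symm⟩
  | resSwap => exact ⟨typingTransfer_resSwap, typingTransfer_resSwap⟩
  | resNil => exact ⟨typingTransfer_resNil, .nil_left Typed.nil.res .resNil⟩
  | resBuf => exact ⟨typingTransfer_resBuf, .nil_left (.resP_buf_self _) .resOBuf⟩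
  | resCBuf => exact ⟨typingTransfer_resCBuf, .nil_left (.resP_cbufP_self _) .resCBuf⟩
  | scope hc => exact ⟨typingTransfer_scope hc, typingTransfer_scope_symm hc⟩
  | parCong _ _ ih₁ ih₂ => exact ⟨ih₁.1.par ih₂.1, ih₁.2.par ih₂.2⟩
  | resCong _ ih => exact ⟨ih.1.res, ih.2.res⟩

/-- Lemma A.7(2) (Inversion for parallel): if `Γ ⊢_B P ▶ T` and `P ≡ P₁ | P₂`,
then `T ≡ T₁ | T₂` with `Γ ⊢_{B₁} P₁ ▶ T₁` and `Γ ⊢_{B₂} P₂ ▶ T₂` for some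
disjoint `B₁`, `B₂` with `B = B₁ ∪ B₂`. -/
theorem inversion_par {B : Finset Name} {P P₁ P₂ : Proc} {T : Ty}
    (h : Typed B P T) (hc : PCong P (.par P₁ P₂)) :
    ∃ (T₁ T₂ : Ty) (B₁ B₂ : Finset Name), B = B₁ ∪ B₂ ∧ Disjoint B₁ B₂ ∧
      Cong T (.par T₁ T₂) ∧ Typed B₁ P₁ T₁ ∧ Typed B₂ P₂ T₂ := by
  obtain ⟨_, hT, h'⟩ := hc.typingTransfer.1 h
  cases h' with | par h₁ h₂ hd => exact ⟨_, _, _, _, rfl, hd, hT, h₁, h₂⟩
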